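/- arXiv:2307.01125 — 9 statements merged into one kernel-verified Lean document; each statement's English description precedes it below -/
import Mathlib

section
/- Let A be a closed, densely defined linear operator on a complex Hilbert space H and C > 0 a constant such that |⟨Ax, x⟩| ≥ C‖x‖² for all x ∈ dom A, and such that ker A* ⊆ dom A. Then A is a bijection from dom A onto H and its inverse A⁻¹ is a bounded operator on H with ‖A⁻¹‖ ≤ C⁻¹. -/
open scoped InnerProductSpace

/-- **(Lemma A.1 of the paper.)** A closed, densely defined operator `A` on a complex
Hilbert space satisfying `|⟨Ax, x⟩| ≥ C‖x‖²` on its domain and `ker A* ⊆ dom A` is a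
bijection from its domain onto `H`, and its inverse is bounded with norm at most `C⁻¹`. -/
theorem closed_densely_defined_coercive_has_bounded_inverse
    {H : Type*} [NormedAddCommGroup H] [InnerProductSpace ℂ H] [CompleteSpace H]
    (A : H →ₗ.[ℂ] H)
    (hclosed : A.IsClosed)
    (hdense : Dense (A.domain : Set H))
    (C : ℝ) (hC : 0 < C)
    (hcoer : ∀ x : A.domain, C * ‖(x : H)‖ ^ 2 ≤ ‖⟪A x, (x : H)⟫_ℂ‖)
    (hker : ∀ y : A.adjoint.domain, A.adjoint y = 0 → (y : H) ∈ A.domain) :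
    (∀ x y : A.domain, A x = A y → x = y) ∧
    (∀ f : H, ∃ x : A.domain, A x = f) ∧
    (∀ x : A.domain, ‖(x : H)‖ ≤ C⁻¹ * ‖A x‖) := by
  -- the basic lower bound `C‖x‖ ≤ ‖A x‖`
  have hbound : ∀ x : A.domain, C * ‖(x : H)‖ ≤ ‖A x‖ := by
    intro x
    by_cases hx : (x : H) = 0
    · simp [hx]
    · have h1 := hcoer x
      have h2 : ‖⟪A x, (x : H)⟫_ℂ‖ ≤ ‖A x‖ * ‖(x : H)‖ := norm_inner_le_norm _ _
      have hxpos : 0 < ‖(x : H)‖ := norm_pos_iff.mpr hx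
      nlinarith
  have hinv : ∀ x : A.domain, ‖(x : H)‖ ≤ C⁻¹ * ‖A x‖ := by
    intro x
    rw [le_inv_mul_iff₀ hC]
    exact hbound x
  -- injectivity
  have hinj : ∀ x y : A.domain, A x = A y → x = y := by
    intro x y h
    have h0 : A (x - y) = 0 := by rw [A.map_sub, h, sub_self]
    have hb := hbound (x - y)
    rw [h0, norm_zero] at hb
    have hxy : ‖((x - y : A.domain) : H)‖ = 0 := le_antisymm (by nlinarith) (norm_nonneg _)
    have h1 : (x : H) - (y : H) = 0 := by simpa using norm_eq_zero.mp hxy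
    exact Subtype.coe_injective (sub_eq_zero.mp h1)
  -- the range of A
  set R : Submodule ℂ H := LinearMap.range A.toFun with hR
  -- the range is closed
  have hgraph : CompleteSpace A.graph := (hclosed.completeSpace_coe)
  let π : A.graph →L[ℂ] H := (ContinuousLinearMap.snd ℂ H H).comp A.graph.subtypeL
  have hπanti : AntilipschitzWith (max C⁻¹ 1).toNNReal π := by
    apply ContinuousLinearMap.antilipschitz_of_bound
    rintro ⟨⟨u, v⟩, hp⟩
    rw [LinearPMap.mem_graph_iff] at hp
    obtain ⟨x, hx1, hx2⟩ := hp
    have hπ : π ⟨(u, v), hp⟩ = v := rfl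
    rw [hπ]
    have hnorm : ‖(⟨(u, v), hp⟩ : A.graph)‖ = max ‖u‖ ‖v‖ := rfl
    rw [hnorm]
    have hcoe : ((max C⁻¹ 1).toNNReal : ℝ) = max C⁻¹ 1 := by
      rw [Real.coe_toNNReal]
      positivity
    rw [hcoe]
    have hu : ‖u‖ ≤ C⁻¹ * ‖v‖ := by
      have := hinv x
      rw [hx1, hx2] at this
      exact this
    have hv : ‖v‖ ≤ 1 * ‖v‖ := by simp
    apply max_le
    · exact hu.trans (by gcongr; exact le_max_left _ _)
    · exact hv.trans (by gcongr; exact le_max_right _ _)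
  have hRclosed : IsClosed (R : Set H) := by
    have h := hπanti.isClosed_range π.uniformContinuous
    have hrange : Set.range π = (R : Set H) := by
      ext v
      constructor
      · rintro ⟨⟨⟨u, w⟩, hp⟩, rfl⟩
        rw [LinearPMap.mem_graph_iff] at hp
        obtain ⟨x, hx1, hx2⟩ := hp
        exact ⟨x, hx2⟩
      · rintro ⟨x, rfl⟩
        exact ⟨⟨((x : H), A x), A.mem_graph x⟩, rfl⟩
    rwa [hrange] at h
  -- the orthogonal complement of the range is trivial
  have hRorth : Rᗮ = ⊥ := by
    rw [Submodule.eq_bot_iff]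
    intro y hy
    rw [Submodule.mem_orthogonal] at hy
    have hy' : ∀ x : A.domain, ⟪A x, y⟫_ℂ = 0 := fun x => hy (A x) ⟨x, rfl⟩
    have hmem : y ∈ A.adjoint.domain := by
      apply LinearPMap.mem_adjoint_domain_of_exists
      exact ⟨0, fun x => by
        rw [inner_zero_left, ← inner_conj_symm, hy' x, map_zero]⟩
    have hA0 : A.adjoint ⟨y, hmem⟩ = 0 := by
      apply LinearPMap.adjoint_apply_eq hdense
      intro x
      rw [inner_zero_left, ← inner_conj_symm, hy' x, map_zero]
    have hyd : y ∈ A.domain := hker ⟨y, hmem⟩ hA0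
    have hc := hcoer ⟨y, hyd⟩
    rw [hy' ⟨y, hyd⟩, norm_zero] at hc
    have hcy : C * ‖y‖ ^ 2 ≤ 0 := hc
    have hsq : ‖y‖ ^ 2 = 0 := by nlinarith [sq_nonneg ‖y‖]
    have hn : ‖y‖ = 0 := by
      have := sq_eq_zero_iff.mp hsq
      simpa using this
    exact norm_eq_zero.mp hn
  -- surjectivity
  have hRcomplete : CompleteSpace R := hRclosed.completeSpace_coe
  have hRtop : R = ⊤ := by
    have h1 : Rᗮᗮ = R := Submodule.orthogonal_orthogonal R
    rw [← h1, hRorth, Submodule.bot_orthogonal_eq_top]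
  have hsurj : ∀ f : H, ∃ x : A.domain, A x = f := by
    intro f
    have : f ∈ R := hRtop ▸ Submodule.mem_top
    exact this
  exact ⟨hinj, hsurj, hinv⟩
end

section
/- Let A be a closed, densely defined linear operator on a complex Hilbert space H with dom A = dom A*, and let C > 0 be such that for every x ∈ dom A one has max{|Re⟨Ax, x⟩|, |Im⟨Ax, x⟩|} ≥ C‖x‖². Then A is a bijection from dom A onto H and its inverse A⁻¹ is a bounded operator on H with ‖A⁻¹‖ ≤ C⁻¹. -/
/-!
Coercivity bounds `‖⟪A x, x⟫‖ ≥ C ‖x‖²`, hence `C ‖x‖ ≤ ‖A x‖`: this gives injectivity and the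
norm bound of the inverse. Projecting the graph of `A`, which is complete because `A` is closed,
onto its second factor is then bounded below, so the range of `A` is closed. A vector `v`
orthogonal to the range lies in `dom A* = dom A` and has `⟪A v, v⟫ = 0`, so `v = 0` by coercivity;
a closed subspace with trivial orthogonal complement is everything.
-/

open scoped InnerProductSpace

theorem mul_norm_le_norm_of_mul_sq_le_norm_inner {𝕜 E : Type*} [RCLike 𝕜] [NormedAddCommGroup E]
    [InnerProductSpace 𝕜 E] {x y : E} {c : ℝ} (h : c * ‖x‖ ^ 2 ≤ ‖⟪y, x⟫_𝕜‖) :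
    c * ‖x‖ ≤ ‖y‖ := by
  rcases (norm_nonneg x).eq_or_lt with hx | hx
  · simp [← hx]
  · refine le_of_mul_le_mul_right ?_ hx
    calc c * ‖x‖ * ‖x‖ = c * ‖x‖ ^ 2 := by ring
      _ ≤ ‖⟪y, x⟫_𝕜‖ := h
      _ ≤ ‖y‖ * ‖x‖ := norm_inner_le_norm y x

namespace LinearPMap

theorem IsClosed.isClosed_range_of_mul_norm_le {𝕜 E F : Type*} [NormedField 𝕜]
    [NormedAddCommGroup E] [NormedSpace 𝕜 E] [CompleteSpace E]
    [NormedAddCommGroup F] [NormedSpace 𝕜 F] [CompleteSpace F]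
    {T : E →ₗ.[𝕜] F} (hT : T.IsClosed) {c : ℝ} (hc : 0 < c)
    (hbound : ∀ x : T.domain, c * ‖(x : E)‖ ≤ ‖T x‖) : _root_.IsClosed (Set.range T) := by
  have : CompleteSpace T.graph := hT.completeSpace_coe
  let g : T.graph →L[𝕜] F := (ContinuousLinearMap.snd 𝕜 E F).comp T.graph.subtypeL
  have hg : ∀ p : T.graph, min c 1 * ‖p‖ ≤ ‖g p‖ := by
    rintro ⟨p, hp⟩
    obtain ⟨x, hx₁, hx₂⟩ := T.mem_graph_iff.1 hp
    have : min c 1 * ‖p.1‖ ≤ ‖p.2‖ := by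
      rw [← hx₁, ← hx₂]
      exact (mul_le_mul_of_nonneg_right (min_le_left c 1) (norm_nonneg _)).trans (hbound x)
    have hc₁ : 0 ≤ min c 1 := le_min hc.le zero_le_one
    simpa [g, Submodule.coe_norm, Prod.norm_def, mul_max_of_nonneg _ _ hc₁]
      using And.intro this (mul_le_of_le_one_left (norm_nonneg _) (min_le_right c 1))
  obtain ⟨K, hK⟩ := antilipschitzWith_iff_exists_mul_le_norm.2 ⟨min c 1, lt_min hc one_pos, hg⟩
  convert hK.isClosed_range g.uniformContinuous using 1
  ext y
  simp [g]

theorem mem_adjoint_domain_of_mem_orthogonal_range {𝕜 E F : Type*} [RCLike 𝕜]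
    [NormedAddCommGroup E] [InnerProductSpace 𝕜 E] [CompleteSpace E]
    [NormedAddCommGroup F] [InnerProductSpace 𝕜 F]
    {T : E →ₗ.[𝕜] F} {v : F} (hv : v ∈ (LinearMap.range T.toFun)ᗮ) : v ∈ T†.domain := by
  have : (innerₛₗ 𝕜 v).comp T.toFun = 0 :=
    LinearMap.ext fun x => Submodule.inner_left_of_mem_orthogonal (LinearMap.mem_range_self _ x) hv
  rw [mem_adjoint_domain_iff, this]
  exact continuous_zero

end LinearPMap

theorem Submodule.eq_top_of_isClosed_of_orthogonal_eq_bot {𝕜 E : Type*} [RCLike 𝕜]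
    [NormedAddCommGroup E] [InnerProductSpace 𝕜 E] [CompleteSpace E] {K : Submodule 𝕜 E}
    (hK : IsClosed (K : Set E)) (horth : Kᗮ = ⊥) : K = ⊤ := by
  rw [← hK.submodule_topologicalClosure_eq, ← K.orthogonal_orthogonal_eq_closure, horth,
    Submodule.bot_orthogonal_eq_top]

theorem closed_densely_defined_re_im_coercive_has_bounded_inverse_general
    {H : Type*} [NormedAddCommGroup H] [InnerProductSpace ℂ H] [CompleteSpace H]
    (A : H →ₗ.[ℂ] H)
    (hclosed : A.IsClosed)
    (hdom : A.adjoint.domain = A.domain)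
    (C : ℝ) (hC : 0 < C)
    (hcoer : ∀ x : A.domain,
      C * ‖(x : H)‖ ^ 2 ≤ max |(⟪A x, (x : H)⟫_ℂ).re| |(⟪A x, (x : H)⟫_ℂ).im|) :
    (∀ x y : A.domain, A x = A y → x = y) ∧
    (∀ f : H, ∃ x : A.domain, A x = f) ∧
    (∀ x : A.domain, ‖(x : H)‖ ≤ C⁻¹ * ‖A x‖) := by
  have hbound (x : A.domain) : C * ‖(x : H)‖ ≤ ‖A x‖ :=
    mul_norm_le_norm_of_mul_sq_le_norm_inner <|
      (hcoer x).trans (max_le (Complex.abs_re_le_norm _) (Complex.abs_im_le_norm _))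
  have horth : (LinearMap.range A.toFun)ᗮ = ⊥ := by
    refine (Submodule.eq_bot_iff _).2 fun v hv => ?_
    have hv_dom : v ∈ A.domain := hdom ▸ LinearPMap.mem_adjoint_domain_of_mem_orthogonal_range hv
    have hAv : ⟪A ⟨v, hv_dom⟩, v⟫_ℂ = 0 :=
      Submodule.inner_right_of_mem_orthogonal (LinearMap.mem_range_self _ _) hv
    have hv₀ : C * ‖v‖ ^ 2 ≤ 0 := by simpa [hAv] using hcoer ⟨v, hv_dom⟩
    simpa [hC.ne'] using le_antisymm hv₀ (by positivity)
  have hrange : LinearMap.range A.toFun = ⊤ :=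
    Submodule.eq_top_of_isClosed_of_orthogonal_eq_bot
      (hclosed.isClosed_range_of_mul_norm_le hC hbound) horth
  obtain ⟨K, hK⟩ := antilipschitzWith_iff_exists_mul_le_norm.2 ⟨C, hC, hbound⟩
  exact ⟨fun _ _ hxy => hK.injective hxy,
    fun f => LinearMap.mem_range.1 (hrange ▸ Submodule.mem_top),
    fun x => (le_inv_mul_iff₀ hC).2 (hbound x)⟩

/-- **(Corollary A.2 of the paper.)** A closed, densely defined operator `A` on a complex
Hilbert space with `dom A = dom A*` and `max{|Re⟨Ax,x⟩|, |Im⟨Ax,x⟩|} ≥ C‖x‖²` on its domain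
is a bijection from its domain onto `H`, with bounded inverse of norm at most `C⁻¹`. -/
theorem closed_densely_defined_re_im_coercive_has_bounded_inverse
    {H : Type*} [NormedAddCommGroup H] [InnerProductSpace ℂ H] [CompleteSpace H]
    (A : H →ₗ.[ℂ] H)
    (hclosed : A.IsClosed)
    (hdense : Dense (A.domain : Set H))
    (hdom : A.adjoint.domain = A.domain)
    (C : ℝ) (hC : 0 < C)
    (hcoer : ∀ x : A.domain,
      C * ‖(x : H)‖ ^ 2 ≤ max |(⟪A x, (x : H)⟫_ℂ).re| |(⟪A x, (x : H)⟫_ℂ).im|) :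
    (∀ x y : A.domain, A x = A y → x = y) ∧
    (∀ f : H, ∃ x : A.domain, A x = f) ∧
    (∀ x : A.domain, ‖(x : H)‖ ≤ C⁻¹ * ‖A x‖) :=
  closed_densely_defined_re_im_coercive_has_bounded_inverse_general A hclosed hdom C hC hcoer
end

section
/- Let 𝒜 and ℬ be bounded linear operators on a complex Banach space X, let P be a continuous linear projection on X (P² = P) that commutes with ℬ (Pℬ = ℬP), and let z₁, z₂ ∈ ℂ be such that all four operators 𝒜 − z₁I, 𝒜 − z₂I, ℬ − z₁I, ℬ − z₂I are boundedly invertible. Then the following identity holds: (𝒜 − z₂I)⁻¹ − P(ℬ − z₂I)⁻¹P = P(ℬ − z₂I)⁻¹P(ℬ − z₁I)P · ((𝒜 − z₁I)⁻¹ − P(ℬ − z₁I)⁻¹P) · (𝒜 − z₁I)(𝒜 − z₂I)⁻¹ + (I − P)(𝒜 − z₁I)⁻¹(𝒜 − z₁I)(𝒜 − z₂I)⁻¹. -/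
theorem key_ring {R : Type*} [Ring R] (C P Q Q1 RA1 RA2 : R)
    (hC : ∀ x : R, C * x = x * C)
    (hPQ1 : P * Q1 = Q1)
    (h1 : C * (RA1 * RA2) = RA2 - RA1)
    (h2 : C * (Q * Q1) = Q - Q1) :
    (P + C * Q) * (RA1 - Q1) * (1 + C * RA2) + (1 - P) * RA1 * (1 + C * RA2)
      = RA2 - Q := by
  have e1 : RA1 * (C * RA2) = RA2 - RA1 := by
    rw [← mul_assoc, ← hC RA1, mul_assoc, h1]
  calc (P + C * Q) * (RA1 - Q1) * (1 + C * RA2) + (1 - P) * RA1 * (1 + C * RA2)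
      = ((P + C * Q) * (RA1 - Q1) + (1 - P) * RA1) * (1 + C * RA2) := by noncomm_ring
    _ = (RA1 + C * Q * RA1 - Q) * (1 + C * RA2) := by
        have e2 : (P + C * Q) * (RA1 - Q1) + (1 - P) * RA1
            = (P * RA1 - P * Q1 + (C * Q * RA1 - C * (Q * Q1))) + (RA1 - P * RA1) := by
          noncomm_ring
        rw [e2, hPQ1, h2]; abel
    _ = RA1 + RA1 * (C * RA2) + (C * Q * (RA1 * (C * RA2)) + C * Q * RA1)
          - Q - Q * C * RA2 := by noncomm_ring
    _ = RA2 - Q := by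
        rw [e1, ← hC Q]
        noncomm_ring

/-- **(Identity (2.9) of the paper.)** For bounded operators `𝒜`, `ℬ` on a complex Banach
space, a continuous projection `P` commuting with `ℬ`, and `z₁, z₂` such that
`𝒜 − z₁I, 𝒜 − z₂I, ℬ − z₁I, ℬ − z₂I` are all boundedly invertible (with two-sided
inverses `RA1, RA2, RB1, RB2`), one has
`(𝒜 − z₂I)⁻¹ − P(ℬ − z₂I)⁻¹P
  = P(ℬ − z₂I)⁻¹P(ℬ − z₁I)P((𝒜 − z₁I)⁻¹ − P(ℬ − z₁I)⁻¹P)(𝒜 − z₁I)(𝒜 − z₂I)⁻¹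
    + (I − P)(𝒜 − z₁I)⁻¹(𝒜 − z₁I)(𝒜 − z₂I)⁻¹`. -/
theorem resolvent_projection_identity
    {X : Type*} [NormedAddCommGroup X] [NormedSpace ℂ X] [CompleteSpace X]
    (A B P : X →L[ℂ] X)
    (hP : P * P = P) (hPB : P * B = B * P)
    (z₁ z₂ : ℂ)
    (RA1 RA2 RB1 RB2 : X →L[ℂ] X)
    (hRA1 : (A - z₁ • 1) * RA1 = 1 ∧ RA1 * (A - z₁ • 1) = 1)
    (hRA2 : (A - z₂ • 1) * RA2 = 1 ∧ RA2 * (A - z₂ • 1) = 1)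
    (hRB1 : (B - z₁ • 1) * RB1 = 1 ∧ RB1 * (B - z₁ • 1) = 1)
    (hRB2 : (B - z₂ • 1) * RB2 = 1 ∧ RB2 * (B - z₂ • 1) = 1) :
    RA2 - P * RB2 * P =
      P * RB2 * P * (B - z₁ • 1) * P * (RA1 - P * RB1 * P) * ((A - z₁ • 1) * RA2)
        + (1 - P) * RA1 * ((A - z₁ • 1) * RA2) := by
  set C : X →L[ℂ] X := (z₂ - z₁) • 1 with hCdef
  have hC : ∀ x : X →L[ℂ] X, C * x = x * C := by
    intro x; simp [hCdef, smul_mul_assoc, mul_smul_comm]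
  have hsplit1 : (A - z₁ • (1 : X →L[ℂ] X)) = (A - z₂ • 1) + C := by
    rw [hCdef]; module
  have hsplitB : (B - z₁ • (1 : X →L[ℂ] X)) = (B - z₂ • 1) + C := by
    rw [hCdef]; module
  -- P commutes with B - z • 1
  have hPB1 : P * (B - z₁ • 1) = (B - z₁ • 1) * P := by
    simp [mul_sub, sub_mul, hPB, mul_smul_comm, smul_mul_assoc]
  have hPB2 : P * (B - z₂ • 1) = (B - z₂ • 1) * P := by
    simp [mul_sub, sub_mul, hPB, mul_smul_comm, smul_mul_assoc]
  -- P commutes with RB1, RB2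
  have hPRB1 : P * RB1 = RB1 * P := by
    calc P * RB1 = RB1 * (B - z₁ • 1) * (P * RB1) := by rw [hRB1.2, one_mul]
      _ = RB1 * ((B - z₁ • 1) * P) * RB1 := by noncomm_ring
      _ = RB1 * (P * (B - z₁ • 1)) * RB1 := by rw [← hPB1]
      _ = RB1 * P * ((B - z₁ • 1) * RB1) := by noncomm_ring
      _ = RB1 * P := by rw [hRB1.1, mul_one]
  have hPRB2 : P * RB2 = RB2 * P := by
    calc P * RB2 = RB2 * (B - z₂ • 1) * (P * RB2) := by rw [hRB2.2, one_mul]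
      _ = RB2 * ((B - z₂ • 1) * P) * RB2 := by noncomm_ring
      _ = RB2 * (P * (B - z₂ • 1)) * RB2 := by rw [← hPB2]
      _ = RB2 * P * ((B - z₂ • 1) * RB2) := by noncomm_ring
      _ = RB2 * P := by rw [hRB2.1, mul_one]
  -- (A - z₁)·RA2 = 1 + C·RA2
  have hA1RA2 : (A - z₁ • 1) * RA2 = 1 + C * RA2 := by
    rw [hsplit1, add_mul, hRA2.1]
  -- P·RB2·P·(B - z₁)·P = P + C·(P·RB2·P)
  have hQB1 : P * RB2 * P * (B - z₁ • 1) * P = P + C * (P * RB2 * P) := by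
    calc P * RB2 * P * (B - z₁ • 1) * P
        = P * RB2 * (P * ((B - z₁ • 1) * P)) := by noncomm_ring
      _ = P * RB2 * (P * (P * (B - z₁ • 1))) := by rw [← hPB1]
      _ = P * RB2 * ((P * P) * (B - z₁ • 1)) := by rw [mul_assoc P P]
      _ = P * RB2 * (P * (B - z₁ • 1)) := by rw [hP]
      _ = P * RB2 * ((B - z₁ • 1) * P) := by rw [hPB1]
      _ = P * (RB2 * (B - z₁ • 1)) * P := by noncomm_ring
      _ = P * (1 + RB2 * C) * P := by rw [hsplitB, mul_add, hRB2.2]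
      _ = P * (1 + C * RB2) * P := by rw [← hC RB2]
      _ = P * P + C * (P * RB2 * P) := by
          rw [mul_add, add_mul, mul_one, ← mul_assoc P C RB2, ← hC P]
          noncomm_ring
      _ = P + C * (P * RB2 * P) := by rw [hP]
  -- resolvent identity for A
  have h1 : C * (RA1 * RA2) = RA2 - RA1 := by
    have e : RA1 * ((A - z₁ • 1) - (A - z₂ • 1)) * RA2 = RA2 - RA1 := by
      rw [mul_sub, sub_mul, hRA1.2, one_mul, mul_assoc, hRA2.1, mul_one]
    have ediff : (A - z₁ • (1 : X →L[ℂ] X)) - (A - z₂ • 1) = C := by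
      rw [hCdef]; module
    rw [ediff] at e
    rw [← e, ← hC RA1, mul_assoc]
  -- resolvent identity for B
  have hB : C * (RB2 * RB1) = RB2 - RB1 := by
    have e : RB2 * ((B - z₁ • 1) - (B - z₂ • 1)) * RB1 = RB2 - RB1 := by
      rw [mul_sub, sub_mul, mul_assoc, hRB1.1, mul_one, hRB2.2, one_mul]
    have ediff : (B - z₁ • (1 : X →L[ℂ] X)) - (B - z₂ • 1) = C := by
      rw [hCdef]; module
    rw [ediff] at e
    rw [← e, ← hC RB2, mul_assoc]
  -- h2 : C·(Q·Q1) = Q - Q1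
  have h2 : C * ((P * RB2 * P) * (P * RB1 * P)) = P * RB2 * P - P * RB1 * P := by
    have eQQ : (P * RB2 * P) * (P * RB1 * P) = P * (RB2 * RB1) * P := by
      calc (P * RB2 * P) * (P * RB1 * P)
          = P * RB2 * ((P * P) * RB1) * P := by noncomm_ring
        _ = P * RB2 * (P * RB1) * P := by rw [hP]
        _ = P * RB2 * (RB1 * P) * P := by rw [hPRB1]
        _ = P * (RB2 * RB1) * (P * P) := by noncomm_ring
        _ = P * (RB2 * RB1) * P := by rw [hP]
    rw [eQQ]
    have e3 : C * (P * (RB2 * RB1) * P) = P * (C * (RB2 * RB1)) * P := by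
      rw [← mul_assoc P C, ← hC P]; noncomm_ring
    rw [e3, hB, mul_sub, sub_mul]
  have hPQ1 : P * (P * RB1 * P) = P * RB1 * P := by
    rw [← mul_assoc, ← mul_assoc, hP]
  rw [hA1RA2, hQB1]
  exact (key_ring C P (P * RB2 * P) (P * RB1 * P) RA1 RA2 hC hPQ1 h1 h2).symm
end

section
/- Let H and E be complex Hilbert spaces, T : H → H a bounded self-adjoint operator, and Π : E → H a bounded operator. For w ∈ ℂ such that I − wT is boundedly invertible, set S(w) := (I − wT)⁻¹Π : E → H and M₀(w) := w·Π*(I − wT)⁻¹Π : E → E. If z, ξ ∈ ℂ are such that both I − zT and I − ξT are boundedly invertible, then I − z̄T is also boundedly invertible and M₀(z) − M₀(ξ) = (z − ξ)·S(z̄)*·S(ξ). -/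
/-- **Resolvent identity for the Weyl M-function.** With `T` bounded self-adjoint,
`Φ : E → H` bounded, `S(w) := (I − wT)⁻¹Φ` and `M₀(w) := w·Φ*(I − wT)⁻¹Φ`: if `I − zT`
and `I − ξT` are boundedly invertible then so is `I − z̄T`, and
`M₀(z) − M₀(ξ) = (z − ξ)·S(z̄)*·S(ξ)`. -/
theorem mFunction_difference_identity
    {H E : Type*} [NormedAddCommGroup H] [InnerProductSpace ℂ H] [CompleteSpace H]
    [NormedAddCommGroup E] [InnerProductSpace ℂ E] [CompleteSpace E]
    (T : H →L[ℂ] H) (hT : IsSelfAdjoint T)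
    (Φ : E →L[ℂ] H)
    (z ξ : ℂ)
    (hz : IsUnit ((1 : H →L[ℂ] H) - z • T)) (hξ : IsUnit ((1 : H →L[ℂ] H) - ξ • T)) :
    IsUnit ((1 : H →L[ℂ] H) - (starRingEnd ℂ z) • T) ∧
    z • (ContinuousLinearMap.adjoint Φ ∘L Ring.inverse ((1 : H →L[ℂ] H) - z • T) ∘L Φ) -
        ξ • (ContinuousLinearMap.adjoint Φ ∘L Ring.inverse ((1 : H →L[ℂ] H) - ξ • T) ∘L Φ) =
      (z - ξ) •
        (ContinuousLinearMap.adjoint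
            (Ring.inverse ((1 : H →L[ℂ] H) - (starRingEnd ℂ z) • T) ∘L Φ) ∘L
          (Ring.inverse ((1 : H →L[ℂ] H) - ξ • T) ∘L Φ)) := by
  have hT' : star T = T := hT
  have hstar : star ((1 : H →L[ℂ] H) - z • T) = (1 : H →L[ℂ] H) - (starRingEnd ℂ z) • T := by
    simp [star_sub, star_smul, hT']
  have h1 : IsUnit ((1 : H →L[ℂ] H) - (starRingEnd ℂ z) • T) := by
    rw [← hstar]; exact hz.star
  refine ⟨h1, ?_⟩
  set Rz := Ring.inverse ((1 : H →L[ℂ] H) - z • T) with hRz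
  set Rξ := Ring.inverse ((1 : H →L[ℂ] H) - ξ • T) with hRξ
  have hstarR : star (Ring.inverse ((1 : H →L[ℂ] H) - (starRingEnd ℂ z) • T)) = Rz := by
    rw [← Ring.inverse_star, hRz]
    congr 1
    simp [star_sub, star_smul, hT']
  have key : z • Rz - ξ • Rξ = (z - ξ) • (Rz * Rξ) := by
    have e1 : ((1 : H →L[ℂ] H) - ξ • T) * Rξ = 1 := Ring.mul_inverse_cancel _ hξ
    have e2 : Rz * ((1 : H →L[ℂ] H) - z • T) = 1 := Ring.inverse_mul_cancel _ hz
    have : Rz * (z • ((1 : H →L[ℂ] H) - ξ • T) - ξ • ((1 : H →L[ℂ] H) - z • T)) * Rξ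
        = (z - ξ) • (Rz * Rξ) := by
      have : z • ((1 : H →L[ℂ] H) - ξ • T) - ξ • ((1 : H →L[ℂ] H) - z • T)
          = (z - ξ) • (1 : H →L[ℂ] H) := by
        simp [smul_sub, sub_smul, smul_smul, mul_comm]
      rw [this]
      simp [mul_smul_comm, smul_mul_assoc]
    have t1 : Rz * (z • ((1 : H →L[ℂ] H) - ξ • T)) * Rξ = z • Rz := by
      rw [mul_smul_comm, smul_mul_assoc, mul_assoc, e1, mul_one]
    have t2 : Rz * (ξ • ((1 : H →L[ℂ] H) - z • T)) * Rξ = ξ • Rξ := by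
      rw [mul_smul_comm, smul_mul_assoc, e2, one_mul]
    rw [← this, mul_sub, sub_mul, t1, t2]
  -- rewrite adjoint (A ∘L Φ) = adjoint Φ ∘L star A
  rw [ContinuousLinearMap.adjoint_comp, ← ContinuousLinearMap.star_eq_adjoint
    (Ring.inverse ((1 : H →L[ℂ] H) - (starRingEnd ℂ z) • T)), hstarR]
  have expand : ∀ (A : H →L[ℂ] H) (c : ℂ),
      c • (ContinuousLinearMap.adjoint Φ ∘L A ∘L Φ)
        = ContinuousLinearMap.adjoint Φ ∘L ((c • A) ∘L Φ) := by
    intro A c; ext x; simp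
  rw [expand _ z, expand _ ξ]
  have : (z - ξ) • ((ContinuousLinearMap.adjoint Φ ∘L Rz) ∘L Rξ ∘L Φ)
      = ContinuousLinearMap.adjoint Φ ∘L (((z - ξ) • (Rz * Rξ)) ∘L Φ) := by
    ext x; simp [ContinuousLinearMap.mul_def]
  rw [this, ← key]
  ext x; simp [sub_smul]
end

section
/- Let H and E be complex Hilbert spaces, T : H → H a bounded self-adjoint operator, and Π : E → H a bounded operator. For w ∈ ℂ such that I − wT is boundedly invertible, set S(w) := (I − wT)⁻¹Π and M₀(w) := w·Π*(I − wT)⁻¹Π. If z ∈ ℂ is such that I − zT is boundedly invertible, then I − z̄T is also boundedly invertible, M₀(z)* = M₀(z̄), and the imaginary part Im M₀(z) := (M₀(z) − M₀(z)*)/(2i) satisfies Im M₀(z) = (Im z)·S(z̄)*·S(z̄). -/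
/-- **Imaginary part of the Weyl M-function.** With `T` bounded self-adjoint,
`Φ : E → H` bounded, `S(w) := (I − wT)⁻¹Φ` and `M₀(w) := w·Φ*(I − wT)⁻¹Φ`: if `I − zT`
is boundedly invertible then so is `I − z̄T`, one has `M₀(z)* = M₀(z̄)`, and
`Im M₀(z) := (M₀(z) − M₀(z)*)/(2i) = (Im z)·S(z̄)*·S(z̄)`. -/
theorem mFunction_imaginary_part
    {H E : Type*} [NormedAddCommGroup H] [InnerProductSpace ℂ H] [CompleteSpace H]
    [NormedAddCommGroup E] [InnerProductSpace ℂ E] [CompleteSpace E]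
    (T : H →L[ℂ] H) (hT : IsSelfAdjoint T)
    (Φ : E →L[ℂ] H)
    (z : ℂ)
    (hz : IsUnit ((1 : H →L[ℂ] H) - z • T)) :
    IsUnit ((1 : H →L[ℂ] H) - (starRingEnd ℂ z) • T) ∧
    ContinuousLinearMap.adjoint
        (z • (ContinuousLinearMap.adjoint Φ ∘L Ring.inverse ((1 : H →L[ℂ] H) - z • T) ∘L Φ)) =
      (starRingEnd ℂ z) •
        (ContinuousLinearMap.adjoint Φ ∘L
          Ring.inverse ((1 : H →L[ℂ] H) - (starRingEnd ℂ z) • T) ∘L Φ) ∧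
    (2 * Complex.I)⁻¹ •
        (z • (ContinuousLinearMap.adjoint Φ ∘L Ring.inverse ((1 : H →L[ℂ] H) - z • T) ∘L Φ) -
          ContinuousLinearMap.adjoint
            (z • (ContinuousLinearMap.adjoint Φ ∘L
              Ring.inverse ((1 : H →L[ℂ] H) - z • T) ∘L Φ))) =
      (z.im : ℂ) •
        (ContinuousLinearMap.adjoint
            (Ring.inverse ((1 : H →L[ℂ] H) - (starRingEnd ℂ z) • T) ∘L Φ) ∘L
          (Ring.inverse ((1 : H →L[ℂ] H) - (starRingEnd ℂ z) • T) ∘L Φ)) := by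
  set A := (1 : H →L[ℂ] H) - z • T with hA
  set B := (1 : H →L[ℂ] H) - (starRingEnd ℂ z) • T with hB
  have hstarA : star A = B := by
    simp [hA, hB, star_sub, star_smul, hT.star_eq]
  have hBu : IsUnit B := hstarA ▸ hz.star
  have hinvA : star (Ring.inverse A) = Ring.inverse B := by
    rw [← hstarA, Ring.inverse_star]
  have hinvB : star (Ring.inverse B) = Ring.inverse A := by
    rw [← hinvA, star_star]
  have hadjA : ContinuousLinearMap.adjoint (Ring.inverse A) = Ring.inverse B := by
    rw [← ContinuousLinearMap.star_eq_adjoint, hinvA]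
  have hadjB : ContinuousLinearMap.adjoint (Ring.inverse B) = Ring.inverse A := by
    rw [← ContinuousLinearMap.star_eq_adjoint, hinvB]
  have hadjM : ContinuousLinearMap.adjoint
        (z • (ContinuousLinearMap.adjoint Φ ∘L Ring.inverse A ∘L Φ)) =
      (starRingEnd ℂ z) • (ContinuousLinearMap.adjoint Φ ∘L Ring.inverse B ∘L Φ) := by
    rw [map_smulₛₗ, ContinuousLinearMap.adjoint_comp, ContinuousLinearMap.adjoint_comp,
      ContinuousLinearMap.adjoint_adjoint, hadjA, ContinuousLinearMap.comp_assoc]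
  refine ⟨hBu, hadjM, ?_⟩
  rw [hadjM]
  have h1 : Ring.inverse A * A = 1 := Ring.inverse_mul_cancel _ hz
  have h2 : B * Ring.inverse B = 1 := Ring.mul_inverse_cancel _ hBu
  have hmid : z • B - (starRingEnd ℂ z) • A = (z - starRingEnd ℂ z) • 1 := by
    simp only [hA, hB, smul_sub, smul_smul, sub_smul]
    rw [mul_comm]
    abel
  have key : z • Ring.inverse A - (starRingEnd ℂ z) • Ring.inverse B
      = (z - starRingEnd ℂ z) • (Ring.inverse A * Ring.inverse B) := by
    have e1 : z • Ring.inverse A = Ring.inverse A * (z • B) * Ring.inverse B := by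
      rw [mul_smul_comm, smul_mul_assoc, mul_assoc, h2, mul_one]
    have e2 : (starRingEnd ℂ z) • Ring.inverse B
        = Ring.inverse A * ((starRingEnd ℂ z) • A) * Ring.inverse B := by
      rw [mul_smul_comm, smul_mul_assoc, h1, one_mul]
    rw [e1, e2, ← sub_mul, ← mul_sub, hmid, mul_smul_comm, mul_one, smul_mul_assoc]
  have hscal : (2 * Complex.I)⁻¹ * (z - starRingEnd ℂ z) = (z.im : ℂ) := by
    rw [Complex.sub_conj]
    push_cast
    field_simp [Complex.I_ne_zero]
  rw [ContinuousLinearMap.adjoint_comp, hadjB]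
  calc (2 * Complex.I)⁻¹ •
        (z • (ContinuousLinearMap.adjoint Φ ∘L Ring.inverse A ∘L Φ) -
          (starRingEnd ℂ z) • (ContinuousLinearMap.adjoint Φ ∘L Ring.inverse B ∘L Φ))
      = (2 * Complex.I)⁻¹ • (ContinuousLinearMap.adjoint Φ ∘L
          ((z • Ring.inverse A - (starRingEnd ℂ z) • Ring.inverse B) ∘L Φ)) := by
        congr 1
        ext x
        simp [ContinuousLinearMap.smul_apply, map_sub, smul_sub]
    _ = ((2 * Complex.I)⁻¹ * (z - starRingEnd ℂ z)) • (ContinuousLinearMap.adjoint Φ ∘L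
          ((Ring.inverse A * Ring.inverse B) ∘L Φ)) := by
        rw [key, mul_smul]
        congr 1
        ext x
        simp
    _ = (z.im : ℂ) • ((ContinuousLinearMap.adjoint Φ ∘L Ring.inverse A) ∘L
          (Ring.inverse B ∘L Φ)) := by
        rw [hscal]; rfl
end

section
/- Let (η_k)_{k∈ℕ} be positive real numbers and (v_k)_{k∈ℕ} ⊂ ℝ³ vectors such that Σ_k (v_k · c)² ≤ θ|c|² for every c ∈ ℝ³, where 0 ≤ θ < 1. For z ∈ ℂ with Im z ≠ 0, the series defining the Zhikov function B(z), with entries B(z)_{ij} = z δ_{ij} + Σ_k z²/(η_k − z) · (v_k)_i (v_k)_j, converges absolutely, and for every c ∈ ℂ³ one has |Im⟨B(z)c, c⟩| ≥ (1 − θ)·|Im z|·‖c‖². -/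
/-!
Expanding the quadratic form, `⟨B(z)c, c⟩ = z‖c‖² + Σ_k z²/(η_k − z) |⟨v_k, c⟩|²`. For real `η`,
`z²/(η − z) = −(z + η) + η²/(η − z)` and `Im (η − z)⁻¹ = Im z / |η − z|²`, so
`Im z · Im (z²/(η − z)) ≥ −(Im z)²`. Hence
`Im z · Im⟨B(z)c, c⟩ ≥ (Im z)² (‖c‖² − Σ_k |⟨v_k, c⟩|²) ≥ (1 − θ)(Im z)² ‖c‖²`,
where the Bessel-type bound on `Σ_k |⟨v_k, c⟩|²` for complex `c` follows from the real one applied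
to `Re c` and `Im c`. Absolute convergence comes from `|z²/(η − z)| ≤ |z|²/|Im z|` and
`|v_i v_j| ≤ (v_i² + v_j²)/2`.
-/

open Finset Complex ComplexConjugate

theorem neg_sq_im_le_im_mul_im_sq_div_ofReal_sub (η : ℝ) (z : ℂ) :
    -z.im ^ 2 ≤ z.im * (z ^ 2 / ((η : ℂ) - z)).im := by
  rcases eq_or_ne ((η : ℂ) - z) 0 with h | h
  · simp [h, sq_nonneg]
  have hsplit : z ^ 2 / ((η : ℂ) - z) = -(z + η) + (η : ℂ) ^ 2 * ((η : ℂ) - z)⁻¹ := by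
    field_simp
    ring
  have him : (z ^ 2 / ((η : ℂ) - z)).im = z.im * (η ^ 2 / normSq ((η : ℂ) - z) - 1) := by
    rw [hsplit]
    simp [inv_im, ← ofReal_pow]
    ring
  have hr : 0 ≤ η ^ 2 / normSq ((η : ℂ) - z) := div_nonneg (sq_nonneg _) (normSq_nonneg _)
  rw [him]
  nlinarith [mul_nonneg (sq_nonneg z.im) hr]

theorem norm_sq_div_ofReal_sub_le (η : ℝ) {z : ℂ} (hz : z.im ≠ 0) :
    ‖z ^ 2 / ((η : ℂ) - z)‖ ≤ ‖z‖ ^ 2 / |z.im| := by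
  rw [norm_div, norm_pow]
  refine div_le_div_of_nonneg_left (by positivity) (abs_pos.mpr hz) ?_
  simpa using abs_im_le_norm ((η : ℂ) - z)

theorem summable_norm_mul_mul_of_norm_le {a : ℕ → ℂ} {C : ℝ} (ha : ∀ k, ‖a k‖ ≤ C)
    {f g : ℕ → ℝ} (hf : Summable fun k => f k ^ 2) (hg : Summable fun k => g k ^ 2) :
    Summable fun k => ‖a k * f k * g k‖ := by
  have hC : 0 ≤ C := (norm_nonneg _).trans (ha 0)
  refine .of_nonneg_of_le (fun _ => norm_nonneg _) (fun k => ?_) ((hf.add hg).mul_left (C / 2))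
  have hfg : 2 * (|f k| * |g k|) ≤ f k ^ 2 + g k ^ 2 := by
    simpa [mul_assoc] using two_mul_le_add_sq |f k| |g k|
  calc ‖a k * f k * g k‖ = ‖a k‖ * (|f k| * |g k|) := by simp [mul_assoc]
    _ ≤ C * (|f k| * |g k|) := by gcongr; exact ha k
    _ ≤ C / 2 * (f k ^ 2 + g k ^ 2) := by nlinarith

theorem sq_im_mul_sub_tsum_le_im_mul_im {z : ℂ} {a : ℕ → ℂ}
    (ha : ∀ k, -z.im ^ 2 ≤ z.im * (a k).im) {s : ℕ → ℝ} (hs : ∀ k, 0 ≤ s k)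
    (hs_sum : Summable s) (hsa : Summable fun k => (s k : ℂ) * a k) (N : ℝ) :
    z.im ^ 2 * (N - ∑' k, s k) ≤ z.im * (z * N + ∑' k, (s k : ℂ) * a k).im := by
  have him : Summable fun k => s k * (a k).im := by
    simpa only [im_ofReal_mul] using (hasSum_im hsa.hasSum).summable
  have hle : -z.im ^ 2 * ∑' k, s k ≤ z.im * ∑' k, s k * (a k).im := by
    rw [← hs_sum.tsum_mul_left, ← him.tsum_mul_left]
    refine (hs_sum.mul_left _).tsum_le_tsum (fun k => ?_) (him.mul_left _)
    nlinarith [mul_le_mul_of_nonneg_left (ha k) (hs k)]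
  rw [add_im, im_tsum hsa, mul_im, ofReal_re, ofReal_im]
  simp only [im_ofReal_mul]
  nlinarith

section FiniteSums

variable {ι : Type*} [Fintype ι]

theorem sq_norm_sum_ofReal_mul (v : ι → ℝ) (c : ι → ℂ) :
    ‖∑ j, (v j : ℂ) * c j‖ ^ 2 = (∑ j, v j * (c j).re) ^ 2 + (∑ j, v j * (c j).im) ^ 2 := by
  rw [Complex.sq_norm, normSq_apply]
  simp [re_sum, im_sum, sq]

theorem summable_sq_apply [DecidableEq ι] {v : ℕ → ι → ℝ}
    (hsummable : ∀ c : ι → ℝ, Summable fun k => (∑ i, v k i * c i) ^ 2) (i : ι) :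
    Summable fun k => v k i ^ 2 := by
  simpa [Pi.single_apply] using hsummable (Pi.single i 1)

theorem summable_sq_norm_sum_ofReal_mul {v : ℕ → ι → ℝ}
    (hsummable : ∀ c : ι → ℝ, Summable fun k => (∑ i, v k i * c i) ^ 2) (c : ι → ℂ) :
    Summable fun k => ‖∑ j, (v k j : ℂ) * c j‖ ^ 2 := by
  simpa only [sq_norm_sum_ofReal_mul] using
    (hsummable fun j => (c j).re).add (hsummable fun j => (c j).im)

theorem tsum_sq_norm_sum_ofReal_mul_le {v : ℕ → ι → ℝ} {θ : ℝ}
    (hsummable : ∀ c : ι → ℝ, Summable fun k => (∑ i, v k i * c i) ^ 2)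
    (hbound : ∀ c : ι → ℝ, (∑' k, (∑ i, v k i * c i) ^ 2) ≤ θ * ∑ i, (c i) ^ 2) (c : ι → ℂ) :
    ∑' k, ‖∑ j, (v k j : ℂ) * c j‖ ^ 2 ≤ θ * ∑ j, ‖c j‖ ^ 2 := by
  simp only [sq_norm_sum_ofReal_mul]
  simp only [Complex.sq_norm, normSq_apply, ← sq]
  rw [(hsummable _).tsum_add (hsummable _), sum_add_distrib, mul_add]
  exact add_le_add (hbound _) (hbound _)

theorem sum_sum_mul_ofReal_mul_ofReal_mul_conj (a : ℂ) (v : ι → ℝ) (c : ι → ℂ) :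
    ∑ i, ∑ j, a * v i * v j * c j * conj (c i) = (‖∑ j, (v j : ℂ) * c j‖ ^ 2 : ℝ) * a := by
  rw [ofReal_pow, ← mul_conj', map_sum, sum_mul, sum_mul, sum_comm]
  refine sum_congr rfl fun i _ => ?_
  simp only [map_mul, conj_ofReal, mul_sum, sum_mul]
  exact sum_congr rfl fun j _ => by ring

theorem sum_sum_ite_mul_mul_conj [DecidableEq ι] (z : ℂ) (c : ι → ℂ) :
    ∑ i, ∑ j, (if i = j then z else 0) * c j * conj (c i) = z * (∑ i, ‖c i‖ ^ 2 : ℝ) := by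
  simp [mul_sum, mul_assoc, mul_conj']

theorem sum_sum_ite_add_tsum_mul_mul_conj [DecidableEq ι] {a : ℕ → ℂ} {v : ℕ → ι → ℝ}
    (hsum : ∀ i j, Summable fun k => a k * v k i * v k j) (z : ℂ) (c : ι → ℂ) :
    ∑ i, ∑ j, ((if i = j then z else 0) + ∑' k, a k * v k i * v k j) * c j * conj (c i) =
      z * (∑ i, ‖c i‖ ^ 2 : ℝ) + ∑' k, (‖∑ j, (v k j : ℂ) * c j‖ ^ 2 : ℝ) * a k := by
  have hterm : ∀ i j, Summable fun k => a k * v k i * v k j * c j * conj (c i) :=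
    fun i j => ((hsum i j).mul_right _).mul_right _
  simp only [add_mul, sum_add_distrib, sum_sum_ite_mul_mul_conj, ← tsum_mul_right]
  simp only [← sum_sum_mul_ofReal_mul_ofReal_mul_conj]
  rw [Summable.tsum_finsetSum fun i _ => summable_sum fun j _ => hterm i j]
  exact congrArg _ (sum_congr rfl fun i _ => (Summable.tsum_finsetSum fun j _ => hterm i j).symm)

end FiniteSums

theorem zhikov_function_im_lower_bound_general
    (η : ℕ → ℝ)
    (v : ℕ → Fin 3 → ℝ) (θ : ℝ)
    (hsummable : ∀ c : Fin 3 → ℝ, Summable fun k => (∑ i, v k i * c i) ^ 2)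
    (hbound : ∀ c : Fin 3 → ℝ, (∑' k, (∑ i, v k i * c i) ^ 2) ≤ θ * ∑ i, (c i) ^ 2)
    (z : ℂ) (hz : z.im ≠ 0) :
    (∀ i j, Summable fun k => ‖z ^ 2 / ((η k : ℂ) - z) * (v k i : ℂ) * (v k j : ℂ)‖) ∧
    ∀ c : Fin 3 → ℂ,
      (1 - θ) * |z.im| * (∑ i, ‖c i‖ ^ 2) ≤
        |(∑ i, ∑ j, ((if i = j then z else 0) +
            ∑' k, z ^ 2 / ((η k : ℂ) - z) * (v k i : ℂ) * (v k j : ℂ)) * c j *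
              (starRingEnd ℂ) (c i)).im| := by
  have ha : ∀ k, ‖z ^ 2 / ((η k : ℂ) - z)‖ ≤ ‖z‖ ^ 2 / |z.im| :=
    fun k => norm_sq_div_ofReal_sub_le (η k) hz
  have habs : ∀ i j, Summable fun k => ‖z ^ 2 / ((η k : ℂ) - z) * (v k i : ℂ) * (v k j : ℂ)‖ :=
    fun i j => summable_norm_mul_mul_of_norm_le ha (summable_sq_apply hsummable i)
      (summable_sq_apply hsummable j)
  refine ⟨habs, fun c => ?_⟩
  set s : ℕ → ℝ := fun k => ‖∑ j, (v k j : ℂ) * c j‖ ^ 2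
  set N : ℝ := ∑ i, ‖c i‖ ^ 2
  have hs : Summable s := summable_sq_norm_sum_ofReal_mul hsummable c
  have hsa : Summable fun k => (s k : ℂ) * (z ^ 2 / ((η k : ℂ) - z)) :=
    (hs.mul_right _).of_norm_bounded fun k => by
      rw [norm_mul, norm_real, Real.norm_of_nonneg (sq_nonneg _)]
      exact mul_le_mul_of_nonneg_left (ha k) (sq_nonneg _)
  have hlower := sq_im_mul_sub_tsum_le_im_mul_im
    (fun k => neg_sq_im_le_im_mul_im_sq_div_ofReal_sub (η k) z) (fun k => sq_nonneg _) hs hsa N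
  have hbessel : ∑' k, s k ≤ θ * N := tsum_sq_norm_sum_ofReal_mul_le hsummable hbound c
  rw [sum_sum_ite_add_tsum_mul_mul_conj (fun i j => (habs i j).of_norm)]
  refine le_of_mul_le_mul_left ?_ (abs_pos.mpr hz)
  calc |z.im| * ((1 - θ) * |z.im| * N) = z.im ^ 2 * (N - θ * N) := by rw [← sq_abs z.im]; ring
    _ ≤ z.im ^ 2 * (N - ∑' k, s k) := by gcongr
    _ ≤ _ := hlower
    _ ≤ _ := le_abs_self _
    _ = _ := abs_mul _ _

/-- **Imaginary-part lower bound for the Zhikov function.** Given positive reals `η_k`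
and vectors `v_k ∈ ℝ³` with `Σ_k (v_k·c)² ≤ θ|c|²` for all real `c` (with `0 ≤ θ < 1`),
for every `z ∈ ℂ` with `Im z ≠ 0` the series defining the Zhikov function
`B(z)_{ij} = zδ_{ij} + Σ_k z²/(η_k − z)·(v_k)_i(v_k)_j` converges absolutely, and for
every `c ∈ ℂ³` one has `|Im⟨B(z)c, c⟩| ≥ (1 − θ)|Im z|‖c‖²`. -/
theorem zhikov_function_im_lower_bound
    (η : ℕ → ℝ) (hη : ∀ k, 0 < η k)
    (v : ℕ → Fin 3 → ℝ) (θ : ℝ) (hθ0 : 0 ≤ θ) (hθ1 : θ < 1)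
    (hsummable : ∀ c : Fin 3 → ℝ, Summable fun k => (∑ i, v k i * c i) ^ 2)
    (hbound : ∀ c : Fin 3 → ℝ, (∑' k, (∑ i, v k i * c i) ^ 2) ≤ θ * ∑ i, (c i) ^ 2)
    (z : ℂ) (hz : z.im ≠ 0) :
    (∀ i j, Summable fun k => ‖z ^ 2 / ((η k : ℂ) - z) * (v k i : ℂ) * (v k j : ℂ)‖) ∧
    ∀ c : Fin 3 → ℂ,
      (1 - θ) * |z.im| * (∑ i, ‖c i‖ ^ 2) ≤
        |(∑ i, ∑ j, ((if i = j then z else 0) +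
            ∑' k, z ^ 2 / ((η k : ℂ) - z) * (v k i : ℂ) * (v k j : ℂ)) * c j *
              (starRingEnd ℂ) (c i)).im| :=
  zhikov_function_im_lower_bound_general η v θ hsummable hbound z hz
end

section
/- Let (η_k)_{k∈ℕ} be positive real numbers and (v_k)_{k∈ℕ} ⊂ ℝ³ vectors such that Σ_k (v_k · c)² ≤ θ|c|² for every c ∈ ℝ³, where 0 ≤ θ < 1, and let B(z) be the associated Zhikov function. Then for every z ∈ ℂ with Im z ≠ 0 the matrix B(z) is invertible, and its inverse satisfies the operator-norm bound ‖B(z)⁻¹‖ ≤ ((1 − θ)·|Im z|)⁻¹. -/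
/-!
For `c ∈ ℂ³` put `w_k = v_k ⬝ c`. Expanding the series entrywise,
`⟪c, B(z) c⟫ = z‖c‖² + Σ_k z²/(η_k - z) |w_k|²`. Since `z²/(η - z) = η²/(η - z) - (η + z)` and
`Im (η²/(η - z))` has the sign of `Im z`, every coefficient satisfies
`Im z · Im (z²/(η_k - z)) ≥ -(Im z)²`; with the Bessel bound `Σ_k |w_k|² ≤ θ‖c‖²` this gives
`Im z · Im ⟪c, B(z) c⟫ ≥ (1 - θ)(Im z)²‖c‖²`. By Cauchy–Schwarz `‖B(z) c‖ ≥ (1 - θ)|Im z|‖c‖`,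
so `B(z)` is injective, hence invertible, and its inverse is bounded by `((1 - θ)|Im z|)⁻¹`.
-/

open Finset Matrix

namespace Complex

theorem neg_im_sq_le_im_mul_im_sq_div_ofReal_sub (η : ℝ) (z : ℂ) :
    -z.im ^ 2 ≤ z.im * (z ^ 2 / (η - z)).im := by
  rcases eq_or_ne ((η : ℂ) - z) 0 with h | h
  · simp only [h, div_zero, zero_im, mul_zero, neg_nonpos]
    positivity
  have hsplit : z ^ 2 / (η - z) = η ^ 2 / (η - z) - (η + z) := by
    field_simp
    ring
  have him : (((η : ℂ) ^ 2) / (η - z)).im = η ^ 2 * z.im / normSq (η - z) := by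
    rw [div_im]
    simp [← ofReal_pow, neg_div]
  rw [hsplit, sub_im, him]
  simp only [add_im, ofReal_im, zero_add]
  have hnonneg : 0 ≤ z.im * (η ^ 2 * z.im / normSq (η - z)) := by
    rw [mul_div_assoc']
    exact div_nonneg (by nlinarith [sq_nonneg (η * z.im)]) (normSq_nonneg _)
  nlinarith

theorem norm_sq_div_ofReal_sub_le (η : ℝ) {z : ℂ} (hz : z.im ≠ 0) :
    ‖z ^ 2 / (η - z)‖ ≤ ‖z‖ ^ 2 / |z.im| := by
  rw [norm_div, norm_pow]
  gcongr
  simpa using abs_im_le_norm ((η : ℂ) - z)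

theorem normSq_sum_ofReal_mul {ι : Type*} [Fintype ι] (a : ι → ℝ) (c : ι → ℂ) :
    normSq (∑ i, (a i : ℂ) * c i) = (∑ i, a i * (c i).re) ^ 2 + (∑ i, a i * (c i).im) ^ 2 := by
  simp [normSq_apply, re_sum, im_sum, sq]

end Complex

section Bessel

variable {ι : Type*} [Fintype ι] {v : ℕ → ι → ℝ}

theorem summable_mul_apply_of_summable_sq_sum_mul [DecidableEq ι]
    (hsummable : ∀ c : ι → ℝ, Summable fun k => (∑ i, v k i * c i) ^ 2) (i j : ι) :
    Summable fun k => v k i * v k j := by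
  have hsq (i : ι) : Summable fun k => v k i ^ 2 := by
    simpa [mul_ite] using hsummable fun j => if j = i then 1 else 0
  refine ((hsq i).add (hsq j)).of_norm_bounded fun k => ?_
  rw [Real.norm_eq_abs, abs_mul]
  nlinarith [sq_nonneg (|v k i| - |v k j|), sq_abs (v k i), sq_abs (v k j)]

theorem summable_normSq_sum_ofReal_mul
    (hsummable : ∀ c : ι → ℝ, Summable fun k => (∑ i, v k i * c i) ^ 2) (c : ι → ℂ) :
    Summable fun k => Complex.normSq (∑ i, (v k i : ℂ) * c i) := by
  simpa only [Complex.normSq_sum_ofReal_mul] using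
    (hsummable fun i => (c i).re).add (hsummable fun i => (c i).im)

theorem tsum_normSq_sum_ofReal_mul_le {θ : ℝ}
    (hsummable : ∀ c : ι → ℝ, Summable fun k => (∑ i, v k i * c i) ^ 2)
    (hbound : ∀ c : ι → ℝ, (∑' k, (∑ i, v k i * c i) ^ 2) ≤ θ * ∑ i, (c i) ^ 2)
    (c : EuclideanSpace ℂ ι) :
    ∑' k, Complex.normSq (∑ i, (v k i : ℂ) * c i) ≤ θ * ‖c‖ ^ 2 := by
  have hnorm : ‖c‖ ^ 2 = ∑ i, (c i).re ^ 2 + ∑ i, (c i).im ^ 2 := by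
    rw [EuclideanSpace.norm_sq_eq, ← sum_add_distrib]
    exact sum_congr rfl fun i _ => by rw [Complex.sq_norm, Complex.normSq_apply]; ring
  simp only [Complex.normSq_sum_ofReal_mul]
  rw [(hsummable _).tsum_add (hsummable _), hnorm, mul_add]
  exact add_le_add (hbound _) (hbound _)

end Bessel

theorem hasSum_star_dotProduct_mulVec_sub {R ι : Type*} [CommRing R] [StarRing R]
    [TopologicalSpace R] [IsTopologicalRing R] [Fintype ι] [DecidableEq ι] {B : Matrix ι ι R}
    {z : R} {t : ℕ → R} {u : ℕ → ι → R}
    (hsum : ∀ i j, Summable fun k => t k * u k i * u k j)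
    (hB : ∀ i j, B i j = (if i = j then z else 0) + ∑' k, t k * u k i * u k j) (c : ι → R) :
    HasSum (fun k => t k * ((star c ⬝ᵥ u k) * (u k ⬝ᵥ c)))
      (star c ⬝ᵥ (B *ᵥ c) - z * (star c ⬝ᵥ c)) := by
  have hterm (k : ℕ) : ∑ i, ∑ j, star c i * (t k * u k i * u k j) * c j =
      t k * ((star c ⬝ᵥ u k) * (u k ⬝ᵥ c)) := by
    rw [dotProduct, dotProduct, sum_mul_sum, mul_sum]
    exact sum_congr rfl fun i _ => by
      rw [mul_sum]
      exact sum_congr rfl fun j _ => by ring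
  have hsum_value : ∑ i, ∑ j, star c i * (∑' k, t k * u k i * u k j) * c j =
      star c ⬝ᵥ (B *ᵥ c) - z * (star c ⬝ᵥ c) := by
    simp only [dotProduct, mulVec, hB, add_mul, mul_add, sum_add_distrib, ite_mul, zero_mul,
      sum_ite_eq, mem_univ, if_true, mul_sum]
    have hdiag : ∑ i, star c i * (z * c i) = ∑ i, z * (star c i * c i) :=
      sum_congr rfl fun i _ => mul_left_comm _ _ _
    rw [hdiag, add_sub_cancel_left]
    simp only [mul_assoc]
  simpa only [hterm, hsum_value] using hasSum_sum (s := univ) fun i _ =>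
    hasSum_sum (s := univ) fun j _ => ((hsum i j).hasSum.mul_left (star c i)).mul_right (c j)

theorem le_norm_of_mul_sq_le_norm_inner {𝕜 E : Type*} [RCLike 𝕜] [NormedAddCommGroup E]
    [InnerProductSpace 𝕜 E] {a : ℝ} {x y : E} (h : a * ‖x‖ ^ 2 ≤ ‖inner 𝕜 x y‖) :
    a * ‖x‖ ≤ ‖y‖ := by
  rcases eq_or_ne x 0 with rfl | hx
  · simp
  have hx : 0 < ‖x‖ := norm_pos_iff.mpr hx
  refine le_of_mul_le_mul_left ?_ hx
  calc ‖x‖ * (a * ‖x‖) = a * ‖x‖ ^ 2 := by ring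
    _ ≤ ‖inner 𝕜 x y‖ := h
    _ ≤ ‖x‖ * ‖y‖ := norm_inner_le_norm x y

theorem Matrix.exists_inv_norm_toEuclideanLin_le {𝕜 n : Type*} [RCLike 𝕜] [Fintype n]
    [DecidableEq n] {M : Matrix n n 𝕜} {a : ℝ} (ha : 0 < a)
    (h : ∀ c : EuclideanSpace 𝕜 n, a * ‖c‖ ≤ ‖toEuclideanLin M c‖) :
    ∃ Minv : Matrix n n 𝕜, M * Minv = 1 ∧ Minv * M = 1 ∧
      ∀ c : EuclideanSpace 𝕜 n, ‖toEuclideanLin Minv c‖ ≤ a⁻¹ * ‖c‖ := by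
  have hinj : Function.Injective M.mulVec := by
    rw [← coe_mulVecLin, injective_iff_map_eq_zero]
    intro x hx
    have hx' := h (WithLp.toLp 2 x)
    simp only [toLpLin_apply, coe_mulVecLin] at hx hx'
    rw [hx, WithLp.toLp_zero, norm_zero] at hx'
    exact (WithLp.toLp_eq_zero 2).mp (norm_le_zero_iff.mp (nonpos_of_mul_nonpos_right hx' ha))
  have hM : IsUnit M.det := (isUnit_iff_isUnit_det M).mp (mulVec_injective_iff_isUnit.mp hinj)
  refine ⟨M⁻¹, mul_nonsing_inv M hM, nonsing_inv_mul M hM, fun c => ?_⟩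
  rw [inv_mul_eq_div, le_div_iff₀ ha, mul_comm]
  have hright : toEuclideanLin M (toEuclideanLin M⁻¹ c) = c := by
    rw [← LinearMap.comp_apply, ← toLpLin_mul_same, mul_nonsing_inv M hM, toLpLin_one,
      LinearMap.id_apply]
  simpa [hright] using h (toEuclideanLin M⁻¹ c)

section Zhikov

variable {ι : Type*} [Fintype ι] [DecidableEq ι] {η : ℕ → ℝ} {v : ℕ → ι → ℝ} {z : ℂ}

theorem summable_zhikov_entry_series (hz : z.im ≠ 0)
    (hsummable : ∀ c : ι → ℝ, Summable fun k => (∑ i, v k i * c i) ^ 2) (i j : ι) :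
    Summable fun k => z ^ 2 / ((η k : ℂ) - z) * (v k i : ℂ) * (v k j : ℂ) := by
  refine ((summable_mul_apply_of_summable_sq_sum_mul hsummable i j).norm.mul_left
    (‖z‖ ^ 2 / |z.im|)).of_norm_bounded fun k => ?_
  rw [mul_assoc, norm_mul, ← Complex.ofReal_mul, Complex.norm_real]
  gcongr
  exact Complex.norm_sq_div_ofReal_sub_le (η k) hz

theorem hasSum_inner_toEuclideanLin_zhikov {B : Matrix ι ι ℂ} (hz : z.im ≠ 0)
    (hsummable : ∀ c : ι → ℝ, Summable fun k => (∑ i, v k i * c i) ^ 2)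
    (hB : ∀ i j, B i j = (if i = j then z else 0) +
      ∑' k, z ^ 2 / ((η k : ℂ) - z) * (v k i : ℂ) * (v k j : ℂ))
    (c : EuclideanSpace ℂ ι) :
    HasSum (fun k => z ^ 2 / ((η k : ℂ) - z) * Complex.normSq (∑ i, (v k i : ℂ) * c i))
      (inner ℂ c (toEuclideanLin B c) - z * ‖c‖ ^ 2) := by
  have hreal (k : ℕ) : star (WithLp.ofLp c) ⬝ᵥ (fun i => (v k i : ℂ)) *
      ((fun i => (v k i : ℂ)) ⬝ᵥ WithLp.ofLp c) = Complex.normSq (∑ i, (v k i : ℂ) * c i) := by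
    rw [star_dotProduct, Complex.normSq_eq_conj_mul_self]
    simp [dotProduct]
  have hnorm : star (WithLp.ofLp c) ⬝ᵥ WithLp.ofLp c = (‖c‖ : ℂ) ^ 2 := by
    have := inner_self_eq_norm_sq_to_K (𝕜 := ℂ) c
    rwa [EuclideanSpace.inner_eq_star_dotProduct, dotProduct_comm] at this
  have := hasSum_star_dotProduct_mulVec_sub (u := fun k i => (v k i : ℂ))
    (summable_zhikov_entry_series hz hsummable) hB (WithLp.ofLp c)
  rw [EuclideanSpace.inner_eq_star_dotProduct, toLpLin_apply, WithLp.ofLp_toLp, dotProduct_comm,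
    ← hnorm]
  simpa only [hreal] using this

theorem zhikov_coercive {θ : ℝ} {B : Matrix ι ι ℂ} (hz : z.im ≠ 0)
    (hsummable : ∀ c : ι → ℝ, Summable fun k => (∑ i, v k i * c i) ^ 2)
    (hbound : ∀ c : ι → ℝ, (∑' k, (∑ i, v k i * c i) ^ 2) ≤ θ * ∑ i, (c i) ^ 2)
    (hB : ∀ i j, B i j = (if i = j then z else 0) +
      ∑' k, z ^ 2 / ((η k : ℂ) - z) * (v k i : ℂ) * (v k j : ℂ))
    (c : EuclideanSpace ℂ ι) :
    (1 - θ) * |z.im| * ‖c‖ ^ 2 ≤ ‖inner ℂ c (toEuclideanLin B c)‖ := by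
  set q := inner ℂ c (toEuclideanLin B c)
  set n : ℕ → ℝ := fun k => Complex.normSq (∑ i, (v k i : ℂ) * c i)
  have hq_im : HasSum (fun k => z.im * (z ^ 2 / ((η k : ℂ) - z)).im * n k)
      (z.im * (q.im - z.im * ‖c‖ ^ 2)) := by
    have hq := hasSum_inner_toEuclideanLin_zhikov hz hsummable hB c
    simpa [Complex.mul_im, ← Complex.ofReal_pow, mul_assoc] using
      (Complex.hasSum_im hq).mul_left z.im
  have hlower : -z.im ^ 2 * ∑' k, n k ≤ z.im * (q.im - z.im * ‖c‖ ^ 2) :=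
    hasSum_le (fun k => mul_le_mul_of_nonneg_right
      (Complex.neg_im_sq_le_im_mul_im_sq_div_ofReal_sub (η k) z) (Complex.normSq_nonneg _))
      ((summable_normSq_sum_ofReal_mul hsummable c).hasSum.mul_left _) hq_im
  have hbessel : ∑' k, n k ≤ θ * ‖c‖ ^ 2 := tsum_normSq_sum_ofReal_mul_le hsummable hbound c
  have him : z.im * q.im ≤ |z.im| * ‖q‖ :=
    (le_abs_self _).trans <| (abs_mul _ _).trans_le <| by gcongr; exact Complex.abs_im_le_norm q
  refine le_of_mul_le_mul_left ?_ (abs_pos.mpr hz)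
  calc |z.im| * ((1 - θ) * |z.im| * ‖c‖ ^ 2)
        = z.im ^ 2 * ‖c‖ ^ 2 - z.im ^ 2 * (θ * ‖c‖ ^ 2) := by rw [← sq_abs z.im]; ring
    _ ≤ z.im ^ 2 * ‖c‖ ^ 2 - z.im ^ 2 * ∑' k, n k := by gcongr
    _ ≤ z.im * q.im := by linarith
    _ ≤ |z.im| * ‖q‖ := him

end Zhikov

theorem zhikov_function_invertible_general
    (η : ℕ → ℝ)
    (v : ℕ → Fin 3 → ℝ) (θ : ℝ) (hθ1 : θ < 1)
    (hsummable : ∀ c : Fin 3 → ℝ, Summable fun k => (∑ i, v k i * c i) ^ 2)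
    (hbound : ∀ c : Fin 3 → ℝ, (∑' k, (∑ i, v k i * c i) ^ 2) ≤ θ * ∑ i, (c i) ^ 2)
    (z : ℂ) (hz : z.im ≠ 0)
    (B : Matrix (Fin 3) (Fin 3) ℂ)
    (hB : ∀ i j, B i j = (if i = j then z else 0) +
      ∑' k, z ^ 2 / ((η k : ℂ) - z) * (v k i : ℂ) * (v k j : ℂ)) :
    ∃ Binv : Matrix (Fin 3) (Fin 3) ℂ,
      B * Binv = 1 ∧ Binv * B = 1 ∧
      ∀ c : EuclideanSpace ℂ (Fin 3),
        ‖Matrix.toEuclideanLin Binv c‖ ≤ ((1 - θ) * |z.im|)⁻¹ * ‖c‖ :=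
  Matrix.exists_inv_norm_toEuclideanLin_le (mul_pos (sub_pos.mpr hθ1) (abs_pos.mpr hz)) fun c =>
    le_norm_of_mul_sq_le_norm_inner (zhikov_coercive hz hsummable hbound hB c)

/-- **Invertibility of the Zhikov function off the real axis.** Given positive reals
`η_k` and vectors `v_k ∈ ℝ³` with `Σ_k (v_k·c)² ≤ θ|c|²` for all real `c`
(with `0 ≤ θ < 1`), for every `z ∈ ℂ` with `Im z ≠ 0` the Zhikov matrix
`B(z)_{ij} = zδ_{ij} + Σ_k z²/(η_k − z)·(v_k)_i(v_k)_j` is invertible and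
`‖B(z)⁻¹‖ ≤ ((1 − θ)|Im z|)⁻¹` in the Euclidean operator norm. -/
theorem zhikov_function_invertible
    (η : ℕ → ℝ) (hη : ∀ k, 0 < η k)
    (v : ℕ → Fin 3 → ℝ) (θ : ℝ) (hθ0 : 0 ≤ θ) (hθ1 : θ < 1)
    (hsummable : ∀ c : Fin 3 → ℝ, Summable fun k => (∑ i, v k i * c i) ^ 2)
    (hbound : ∀ c : Fin 3 → ℝ, (∑' k, (∑ i, v k i * c i) ^ 2) ≤ θ * ∑ i, (c i) ^ 2)
    (z : ℂ) (hz : z.im ≠ 0)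
    (B : Matrix (Fin 3) (Fin 3) ℂ)
    (hB : ∀ i j, B i j = (if i = j then z else 0) +
      ∑' k, z ^ 2 / ((η k : ℂ) - z) * (v k i : ℂ) * (v k j : ℂ)) :
    ∃ Binv : Matrix (Fin 3) (Fin 3) ℂ,
      B * Binv = 1 ∧ Binv * B = 1 ∧
      ∀ c : EuclideanSpace ℂ (Fin 3),
        ‖Matrix.toEuclideanLin Binv c‖ ≤ ((1 - θ) * |z.im|)⁻¹ * ‖c‖ :=
  zhikov_function_invertible_general η v θ hθ1 hsummable hbound z hz B hB
end

section
/- Let (η_k)_{k∈ℕ} be positive real numbers and (v_k)_{k∈ℕ} ⊂ ℝ³ vectors such that Σ_k (v_k · c)² ≤ θ|c|² for every c ∈ ℝ³, where 0 ≤ θ < 1. Let z ∈ ℝ be a real number with d := inf_k |η_k − z| > 0. Then the series defining the matrix D(z) := I + Σ_k (η_k²/(η_k − z)² − 1)·v_k v_kᵀ converges absolutely, and D(z) is positive definite with the uniform lower bound ⟨D(z)c, c⟩ ≥ (1 − θ)·‖c‖² for every c ∈ ℂ³. (The matrix D(z) is the derivative B′(z) of the Zhikov function at the real point z; its positive definiteness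 implies that the eigenvalue branches of B(z) are strictly increasing on every interval of analyticity on the real line.) -/
open Finset

/-! The coefficient `η²/(η − z)² − 1` is at least `−1`, and it is bounded because
`η/(η − z) = 1 + z/(η − z)` and `|η − z| ≥ d`; boundedness gives absolute convergence. At a real
vector `u` the quadratic form of `D(z)` is `|u|² + Σ_k (η_k²/(η_k − z)² − 1)(v_k·u)²`, which is at
least `|u|² − Σ_k (v_k·u)² ≥ (1 − θ)|u|²`. Since `D(z)` is real, its Hermitian form at `c ∈ ℂ³` is
the sum of its quadratic forms at `Re c` and `Im c`. -/

lemma abs_div_sub_le {η z d : ℝ} (hd : 0 < d) (hdist : d ≤ |η - z|) :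
    |η / (η - z)| ≤ 1 + |z| / d := by
  have hne : η - z ≠ 0 := abs_pos.mp (hd.trans_le hdist)
  calc |η / (η - z)| = |1 + z / (η - z)| := by rw [one_add_div hne, sub_add_cancel]
    _ ≤ 1 + |z| / |η - z| := by simpa [abs_div] using abs_add_le 1 (z / (η - z))
    _ ≤ 1 + |z| / d := by gcongr

lemma abs_sq_div_sq_sub_one_le {η z d : ℝ} (hd : 0 < d) (hdist : d ≤ |η - z|) :
    |η ^ 2 / (η - z) ^ 2 - 1| ≤ (1 + |z| / d) ^ 2 + 1 := by
  have hsq : η ^ 2 / (η - z) ^ 2 ≤ (1 + |z| / d) ^ 2 := by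
    rw [← div_pow, ← sq_abs]
    exact pow_le_pow_left₀ (abs_nonneg _) (abs_div_sub_le hd hdist) 2
  have hnonneg : 0 ≤ η ^ 2 / (η - z) ^ 2 := by positivity
  rw [abs_le]
  constructor <;> linarith

lemma summable_abs_mul_mul_of_abs_le {β : Type*} {A a b : β → ℝ} {C : ℝ} (hA : ∀ k, |A k| ≤ C)
    (ha : Summable fun k => a k ^ 2) (hb : Summable fun k => b k ^ 2) :
    Summable fun k => |A k * a k * b k| := by
  refine Summable.of_nonneg_of_le (fun k => abs_nonneg _) (fun k => ?_) ((ha.add hb).mul_left C)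
  have hab : |a k| * |b k| ≤ a k ^ 2 + b k ^ 2 := by
    nlinarith [two_mul_le_add_sq |a k| |b k|, sq_abs (a k), sq_abs (b k)]
  rw [abs_mul, abs_mul, mul_assoc]
  exact mul_le_mul (hA k) hab (by positivity) ((abs_nonneg _).trans (hA k))

lemma hasSum_mul_sq_sum {β ι : Type*} [Fintype ι] {A : β → ℝ} {v : β → ι → ℝ}
    (h : ∀ i j, Summable fun k => A k * v k i * v k j) (u : ι → ℝ) :
    HasSum (fun k => A k * (∑ i, v k i * u i) ^ 2)
      (∑ i, ∑ j, (∑' k, A k * v k i * v k j) * (u j * u i)) := by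
  have hexpand : ∀ k, A k * (∑ i, v k i * u i) ^ 2 =
      ∑ i, ∑ j, A k * v k i * v k j * (u j * u i) := fun k => by
    simp only [sq, mul_sum, sum_mul]
    exact sum_congr rfl fun i _ => sum_congr rfl fun j _ => by ring
  simp only [hexpand]
  exact hasSum_sum fun i _ => hasSum_sum fun j _ => (h i j).hasSum.mul_right (u j * u i)

lemma one_sub_mul_sum_sq_le {β ι : Type*} [Fintype ι] [DecidableEq ι] {A : β → ℝ}
    {v : β → ι → ℝ} {θ : ℝ} {u : ι → ℝ} (hA : ∀ k, -1 ≤ A k)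
    (h : ∀ i j, Summable fun k => A k * v k i * v k j)
    (hsummable : Summable fun k => (∑ i, v k i * u i) ^ 2)
    (hbound : ∑' k, (∑ i, v k i * u i) ^ 2 ≤ θ * ∑ i, u i ^ 2) :
    (1 - θ) * ∑ i, u i ^ 2 ≤
      ∑ i, ∑ j, ((if i = j then (1 : ℝ) else 0) + ∑' k, A k * v k i * v k j) * (u j * u i) := by
  have hform := hasSum_mul_sq_sum h u
  have hidentity : ∑ i, ∑ j, (if i = j then (1 : ℝ) else 0) * (u j * u i) = ∑ i, u i ^ 2 := by
    simp [sq]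
  have hlower : -∑' k, (∑ i, v k i * u i) ^ 2 ≤ ∑' k, A k * (∑ i, v k i * u i) ^ 2 := by
    rw [← tsum_neg]
    exact hsummable.neg.tsum_le_tsum
      (fun k => by nlinarith [hA k, sq_nonneg (∑ i, v k i * u i)]) hform.summable
  simp only [add_mul, sum_add_distrib, hidentity, ← hform.tsum_eq]
  linarith

lemma le_re_sum_sum_ofReal_mul_mul_conj {ι : Type*} [Fintype ι] (M : ι → ι → ℝ) {m : ℝ}
    (h : ∀ u : ι → ℝ, m * ∑ i, u i ^ 2 ≤ ∑ i, ∑ j, M i j * (u j * u i)) (c : ι → ℂ) :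
    m * ∑ i, ‖c i‖ ^ 2 ≤ (∑ i, ∑ j, (M i j : ℂ) * c j * (starRingEnd ℂ) (c i)).re := by
  have hre : (∑ i, ∑ j, (M i j : ℂ) * c j * (starRingEnd ℂ) (c i)).re =
      ∑ i, ∑ j, M i j * ((c j).re * (c i).re) + ∑ i, ∑ j, M i j * ((c j).im * (c i).im) := by
    simp only [Complex.re_sum, ← sum_add_distrib]
    refine sum_congr rfl fun i _ => sum_congr rfl fun j _ => ?_
    simp only [Complex.mul_re, Complex.mul_im, Complex.ofReal_re, Complex.ofReal_im,
      Complex.conj_re, Complex.conj_im]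
    ring
  have hnorm : ∑ i, ‖c i‖ ^ 2 = ∑ i, (c i).re ^ 2 + ∑ i, (c i).im ^ 2 := by
    rw [← sum_add_distrib]
    exact sum_congr rfl fun i _ => by rw [Complex.sq_norm, Complex.normSq_apply, sq, sq]
  rw [hre, hnorm, mul_add]
  exact add_le_add (h fun i => (c i).re) (h fun i => (c i).im)

theorem zhikov_derivative_positive_definite_general
    (η : ℕ → ℝ)
    (v : ℕ → Fin 3 → ℝ) (θ : ℝ)
    (hsummable : ∀ c : Fin 3 → ℝ, Summable fun k => (∑ i, v k i * c i) ^ 2)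
    (hbound : ∀ c : Fin 3 → ℝ, (∑' k, (∑ i, v k i * c i) ^ 2) ≤ θ * ∑ i, (c i) ^ 2)
    (z d : ℝ) (hd : 0 < d) (hdist : ∀ k, d ≤ |η k - z|) :
    (∀ i j, Summable fun k => |((η k) ^ 2 / (η k - z) ^ 2 - 1) * v k i * v k j|) ∧
    ∀ c : Fin 3 → ℂ,
      (1 - θ) * (∑ i, ‖c i‖ ^ 2) ≤
        (∑ i, ∑ j, (((if i = j then (1 : ℝ) else 0) +
            ∑' k, ((η k) ^ 2 / (η k - z) ^ 2 - 1) * v k i * v k j : ℝ) : ℂ) * c j *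
              (starRingEnd ℂ) (c i)).re := by
  have hcoord : ∀ i, Summable fun k => v k i ^ 2 := fun i => by
    simpa [Pi.single_apply] using hsummable (Pi.single i 1)
  have habs : ∀ i j, Summable fun k => |((η k) ^ 2 / (η k - z) ^ 2 - 1) * v k i * v k j| :=
    fun i j => summable_abs_mul_mul_of_abs_le (fun k => abs_sq_div_sq_sub_one_le hd (hdist k))
      (hcoord i) (hcoord j)
  refine ⟨habs, le_re_sum_sum_ofReal_mul_mul_conj _ fun u => ?_⟩
  refine one_sub_mul_sum_sq_le (fun k => ?_) (fun i j => (habs i j).of_abs) (hsummable u)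
    (hbound u)
  have : 0 ≤ η k ^ 2 / (η k - z) ^ 2 := by positivity
  linarith

/-- **Positive definiteness of the derivative of the Zhikov function on the real line.**
Given positive reals `η_k` and vectors `v_k ∈ ℝ³` with `Σ_k (v_k·c)² ≤ θ|c|²` for all
real `c` (with `0 ≤ θ < 1`), and a real `z` with `inf_k |η_k − z| ≥ d > 0`, the series
defining `D(z) := I + Σ_k (η_k²/(η_k − z)² − 1)·v_k v_kᵀ` converges absolutely and
`⟨D(z)c, c⟩ ≥ (1 − θ)‖c‖²` for every `c ∈ ℂ³`. -/
theorem zhikov_derivative_positive_definite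
    (η : ℕ → ℝ) (hη : ∀ k, 0 < η k)
    (v : ℕ → Fin 3 → ℝ) (θ : ℝ) (hθ0 : 0 ≤ θ) (hθ1 : θ < 1)
    (hsummable : ∀ c : Fin 3 → ℝ, Summable fun k => (∑ i, v k i * c i) ^ 2)
    (hbound : ∀ c : Fin 3 → ℝ, (∑' k, (∑ i, v k i * c i) ^ 2) ≤ θ * ∑ i, (c i) ^ 2)
    (z d : ℝ) (hd : 0 < d) (hdist : ∀ k, d ≤ |η k - z|) :
    (∀ i j, Summable fun k => |((η k) ^ 2 / (η k - z) ^ 2 - 1) * v k i * v k j|) ∧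
    ∀ c : Fin 3 → ℂ,
      (1 - θ) * (∑ i, ‖c i‖ ^ 2) ≤
        (∑ i, ∑ j, (((if i = j then (1 : ℝ) else 0) +
            ∑' k, ((η k) ^ 2 / (η k - z) ^ 2 - 1) * v k i * v k j : ℝ) : ℂ) * c j *
              (starRingEnd ℂ) (c i)).re :=
  zhikov_derivative_positive_definite_general η v θ hsummable hbound z d hd hdist
end

section
/- Let A and B be bounded self-adjoint operators on a nontrivial complex Hilbert space X, let P be an orthogonal projection on X commuting with B (PB = BP), and let δ ≥ 0. Assume that ‖(A − iI)⁻¹ − P(B − iI)⁻¹P‖ ≤ δ and ‖(I − P)(A − iI)⁻¹‖ ≤ δ. Then for every z ∈ ℂ with z ∉ σ(A) ∪ σ(B) one has ‖(A − zI)⁻¹ − P(B − zI)⁻¹P‖ ≤ 2δ·(1 + (|z| + 1)/dist(z, σ(A)))·(1 + (|z| + 1)/dist(z, σ(B))). -/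
/-!
Both the resolvent `R(z) = (A - z)⁻¹` and the compressed resolvent `Q(z) = P (B - z)⁻¹ P` satisfy
the resolvent identity, the latter because `P` is an idempotent commuting with `B`. Two
pseudo-resolvents factor as `R(z) - Q(z) = (1 + (z - i) R(z)) (R(i) - Q(i)) (1 + (z - i) Q(z))`,
and for normal operators `‖(T - z)⁻¹‖ = dist(z, σ(T))⁻¹` bounds the outer factors.
-/

theorem Commute.ring_inverse_right {M : Type*} [MonoidWithZero M] {a b : M} (h : Commute a b) :
    Commute a (Ring.inverse b) := by
  by_cases hb : IsUnit b
  · obtain ⟨u, rfl⟩ := hb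
    rw [Ring.inverse_unit]
    exact h.units_inv_right
  · rw [Ring.inverse_non_unit _ hb]
    exact Commute.zero_right a

section Algebra

variable {R A : Type*} [CommRing R] [Ring A] [Algebra R A]

theorem isUnit_sub_smul_one_of_notMem_spectrum {a : A} {z : R} (hz : z ∉ spectrum R a) :
    IsUnit (a - z • (1 : A)) := by
  simpa [Algebra.algebraMap_eq_smul_one] using (spectrum.notMem_iff.mp hz).neg

variable {x : A} {r s : R}

theorem one_add_smul_inverse_mul_inverse (hr : IsUnit (x - r • (1 : A)))
    (hs : IsUnit (x - s • (1 : A))) :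
    (1 + (r - s) • Ring.inverse (x - r • 1)) * Ring.inverse (x - s • 1) =
      Ring.inverse (x - r • 1) := by
  have h : 1 + (r - s) • Ring.inverse (x - r • 1) = Ring.inverse (x - r • 1) * (x - s • 1) := by
    rw [show x - s • (1 : A) = (x - r • 1) + (r - s) • 1 by module, mul_add,
      Ring.inverse_mul_cancel _ hr, mul_smul_one]
  rw [h, mul_assoc, Ring.mul_inverse_cancel _ hs, mul_one]

theorem inverse_mul_one_add_smul_inverse (hr : IsUnit (x - r • (1 : A)))
    (hs : IsUnit (x - s • (1 : A))) :
    Ring.inverse (x - s • 1) * (1 + (r - s) • Ring.inverse (x - r • 1)) =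
      Ring.inverse (x - r • 1) := by
  have h : 1 + (r - s) • Ring.inverse (x - r • 1) = (x - s • 1) * Ring.inverse (x - r • 1) := by
    rw [show x - s • (1 : A) = (x - r • 1) + (r - s) • 1 by module, add_mul,
      Ring.mul_inverse_cancel _ hr, smul_one_mul]
  rw [h, ← mul_assoc, Ring.inverse_mul_cancel _ hs, one_mul]

theorem IsIdempotentElem.mul_mul_mul_one_add_smul {p c c' : A} (w : R) (hp : IsIdempotentElem p)
    (hc' : Commute p c') :
    p * c * p * (1 + w • (p * c' * p)) = p * (c * (1 + w • c')) * p := by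
  have : p * c * p * (p * c' * p) = p * (c * c') * p := by
    rw [show p * c * p * (p * c' * p) = p * c * (p * p * c') * p by noncomm_ring, hp.eq, hc'.eq,
      mul_assoc, mul_assoc c', hp.eq]
    noncomm_ring
  rw [mul_add, mul_one, mul_smul_comm, this, mul_add, mul_one, mul_smul_comm]
  noncomm_ring

theorem IsIdempotentElem.mul_inverse_mul_one_add_smul_mul_inverse_mul {p : A}
    (hp : IsIdempotentElem p) (hpx : Commute p x) (hr : IsUnit (x - r • (1 : A)))
    (hs : IsUnit (x - s • (1 : A))) :
    p * Ring.inverse (x - s • 1) * p * (1 + (r - s) • (p * Ring.inverse (x - r • 1) * p)) =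
      p * Ring.inverse (x - r • 1) * p := by
  have hpr : Commute p (Ring.inverse (x - r • 1)) :=
    (hpx.sub_right ((Commute.one_right p).smul_right r)).ring_inverse_right
  rw [hp.mul_mul_mul_one_add_smul _ hpr, inverse_mul_one_add_smul_inverse hr hs]

theorem sub_eq_mul_sub_mul_of_resolvent_identity {a a' b b' : A} (w : R)
    (ha : (1 + w • a') * a = a') (hb : b * (1 + w • b') = b') :
    a' - b' = (1 + w • a') * (a - b) * (1 + w • b') := by
  rw [mul_sub, ha, sub_mul, mul_assoc, hb]
  noncomm_ring

end Algebra

theorem IsSelfAdjoint.notMem_spectrum_of_im_ne_zero {A : Type*} [CStarAlgebra A] {a : A}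
    (ha : IsSelfAdjoint a) {z : ℂ} (hz : z.im ≠ 0) : z ∉ spectrum ℂ a :=
  fun h => hz (ha.im_eq_zero_of_mem_spectrum h)

theorem IsStarNormal.norm_le_of_forall_mem_spectrum {A : Type*} [CStarAlgebra A] {a : A}
    [IsStarNormal a] {c : ℝ} (hc : 0 ≤ c) (h : ∀ μ ∈ spectrum ℂ a, ‖μ‖ ≤ c) : ‖a‖ ≤ c := by
  have : (‖a‖₊ : ENNReal) ≤ ENNReal.ofReal c := by
    rw [← IsStarNormal.spectralRadius_eq_nnnorm]
    refine iSup₂_le fun μ hμ => ?_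
    rw [← enorm_eq_nnnorm, ← ofReal_norm]
    exact ENNReal.ofReal_le_ofReal (h μ hμ)
  rwa [← enorm_eq_nnnorm, ← ofReal_norm, ENNReal.ofReal_le_ofReal_iff hc] at this

theorem IsStarNormal.norm_inverse_sub_smul_one_le {A : Type*} [CStarAlgebra A] {a : A}
    [IsStarNormal a] {z : ℂ} (hz : z ∉ spectrum ℂ a) :
    ‖Ring.inverse (a - z • (1 : A))‖ ≤ (Metric.infDist z (spectrum ℂ a))⁻¹ := by
  obtain ⟨u, hu⟩ := isUnit_sub_smul_one_of_notMem_spectrum hz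
  have : IsStarNormal (u : A) := hu ▸ Commute.isStarNormal_sub (by
    rw [star_smul, star_one]; exact (Commute.one_right a).smul_right _)
  rw [← hu, Ring.inverse_unit]
  refine IsStarNormal.norm_le_of_forall_mem_spectrum (inv_nonneg.mpr Metric.infDist_nonneg)
    fun μ hμ => ?_
  have hmem : z + μ⁻¹ ∈ spectrum ℂ a := by
    rw [← spectrum.map_inv, Set.mem_inv, hu] at hμ
    rwa [add_comm, spectrum.add_mem_iff, neg_add_eq_sub, Algebra.algebraMap_eq_smul_one]
  have hd : 0 < Metric.infDist z (spectrum ℂ a) :=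
    ((spectrum.isClosed a).notMem_iff_infDist_pos ⟨_, hmem⟩).mp hz
  calc ‖μ‖ = ‖μ⁻¹‖⁻¹ := by rw [norm_inv, inv_inv]
    _ ≤ _ := inv_anti₀ hd <| by
      simpa [dist_eq_norm] using Metric.infDist_le_dist_of_mem (x := z) hmem

theorem IsStarProjection.norm_mul_mul_le {A : Type*} [NonUnitalNormedRing A] [StarRing A]
    [CStarRing A] {p : A} (hp : IsStarProjection p) (x : A) : ‖p * x * p‖ ≤ ‖x‖ :=
  calc ‖p * x * p‖ ≤ ‖p‖ * ‖x‖ * ‖p‖ := norm_mul₃_le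
    _ ≤ 1 * ‖x‖ * 1 := by gcongr <;> exact hp.norm_le
    _ = ‖x‖ := by ring

theorem norm_one_add_smul_le {𝕜 A : Type*} [NormedField 𝕜] [NormedRing A] [NormOneClass A]
    [NormedAlgebra 𝕜 A] {w : 𝕜} {x : A} {c b : ℝ} (hw : ‖w‖ ≤ c) (hx : ‖x‖ ≤ b) :
    ‖1 + w • x‖ ≤ 1 + c * b :=
  calc ‖1 + w • x‖ ≤ 1 + ‖w‖ * ‖x‖ := by simpa [norm_smul] using norm_add_le (1 : A) (w • x)
    _ ≤ 1 + c * b := by gcongr; exact (norm_nonneg w).trans hw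

theorem resolvent_approximation_extension_general
    {X : Type*} [NormedAddCommGroup X] [InnerProductSpace ℂ X] [CompleteSpace X] [Nontrivial X]
    (A B P : X →L[ℂ] X)
    (hA : IsSelfAdjoint A) (hB : IsSelfAdjoint B)
    (hP2 : P * P = P) (hPsa : IsSelfAdjoint P)
    (hPB : P * B = B * P)
    (δ : ℝ)
    (h1 : ‖Ring.inverse (A - Complex.I • (1 : X →L[ℂ] X)) -
        P * Ring.inverse (B - Complex.I • (1 : X →L[ℂ] X)) * P‖ ≤ δ)
    (z : ℂ) (hzA : z ∉ spectrum ℂ A) (hzB : z ∉ spectrum ℂ B) :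
    ‖Ring.inverse (A - z • (1 : X →L[ℂ] X)) -
        P * Ring.inverse (B - z • (1 : X →L[ℂ] X)) * P‖ ≤
      2 * δ * (1 + (‖z‖ + 1) / Metric.infDist z (spectrum ℂ A)) *
        (1 + (‖z‖ + 1) / Metric.infDist z (spectrum ℂ B)) := by
  have hiA := hA.notMem_spectrum_of_im_ne_zero (z := Complex.I) (by simp)
  have hiB := hB.notMem_spectrum_of_im_ne_zero (z := Complex.I) (by simp)
  have hresA := one_add_smul_inverse_mul_inverse (isUnit_sub_smul_one_of_notMem_spectrum hzA)
    (isUnit_sub_smul_one_of_notMem_spectrum hiA)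
  have hresB := IsIdempotentElem.mul_inverse_mul_one_add_smul_mul_inverse_mul hP2 hPB
    (isUnit_sub_smul_one_of_notMem_spectrum hzB) (isUnit_sub_smul_one_of_notMem_spectrum hiB)
  rw [sub_eq_mul_sub_mul_of_resolvent_identity _ hresA hresB, div_eq_mul_inv, div_eq_mul_inv]
  have hw : ‖z - Complex.I‖ ≤ ‖z‖ + 1 := by simpa using norm_sub_le z Complex.I
  have hfA := norm_one_add_smul_le hw (hA.isStarNormal.norm_inverse_sub_smul_one_le hzA)
  have hfB := norm_one_add_smul_le hw <| (IsStarProjection.norm_mul_mul_le ⟨hP2, hPsa⟩ _).trans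
    (hB.isStarNormal.norm_inverse_sub_smul_one_le hzB)
  have hδ : 0 ≤ δ := (norm_nonneg _).trans h1
  have hcA := (norm_nonneg _).trans hfA
  have hcB := (norm_nonneg _).trans hfB
  -- the factorization already gives the bound with `δ` in place of `2 * δ`
  calc _ ≤ _ := norm_mul₃_le
    _ ≤ _ := mul_le_mul (mul_le_mul hfA h1 (norm_nonneg _) hcA) hfB (norm_nonneg _)
      (mul_nonneg hcA hδ)
    _ ≤ _ := by linarith [mul_nonneg (mul_nonneg hcA hδ) hcB]

/-- **(Corollary 2.4 of the paper, quantitative form.)** Let `A`, `B` be bounded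
self-adjoint operators on a nontrivial complex Hilbert space, `P` an orthogonal
projection commuting with `B`, and `δ ≥ 0` such that
`‖(A − iI)⁻¹ − P(B − iI)⁻¹P‖ ≤ δ` and `‖(I − P)(A − iI)⁻¹‖ ≤ δ`. Then for every
`z ∉ σ(A) ∪ σ(B)`,
`‖(A − zI)⁻¹ − P(B − zI)⁻¹P‖
  ≤ 2δ(1 + (|z| + 1)/dist(z, σ(A)))(1 + (|z| + 1)/dist(z, σ(B)))`. -/
theorem resolvent_approximation_extension
    {X : Type*} [NormedAddCommGroup X] [InnerProductSpace ℂ X] [CompleteSpace X] [Nontrivial X]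
    (A B P : X →L[ℂ] X)
    (hA : IsSelfAdjoint A) (hB : IsSelfAdjoint B)
    (hP2 : P * P = P) (hPsa : IsSelfAdjoint P)
    (hPB : P * B = B * P)
    (δ : ℝ) (hδ : 0 ≤ δ)
    (h1 : ‖Ring.inverse (A - Complex.I • (1 : X →L[ℂ] X)) -
        P * Ring.inverse (B - Complex.I • (1 : X →L[ℂ] X)) * P‖ ≤ δ)
    (h2 : ‖((1 : X →L[ℂ] X) - P) * Ring.inverse (A - Complex.I • (1 : X →L[ℂ] X))‖ ≤ δ)
    (z : ℂ) (hzA : z ∉ spectrum ℂ A) (hzB : z ∉ spectrum ℂ B) :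
    ‖Ring.inverse (A - z • (1 : X →L[ℂ] X)) -
        P * Ring.inverse (B - z • (1 : X →L[ℂ] X)) * P‖ ≤
      2 * δ * (1 + (‖z‖ + 1) / Metric.infDist z (spectrum ℂ A)) *
        (1 + (‖z‖ + 1) / Metric.infDist z (spectrum ℂ B)) :=
  resolvent_approximation_extension_general A B P hA hB hP2 hPsa hPB δ h1 z hzA hzB
end
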